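/- (Lemma 1(a)) Let φ be the standard normal density and Φ the standard normal cdf. Fix z < 0. Then the function ν ↦ R(z,ν) = (φ(z−ν)·Φ(z+ν) − φ(z+ν)·Φ(z−ν)) / (φ(z+ν) − φ(z−ν)) is monotonically non-increasing on the set of ν > 0 with z < −ν/2 (i.e. for 0 < ν < −2z). -/

import Mathlib

open MeasureTheory Real

/-- The standard normal density φ(u) = exp(-u²/2)/√(2π). -/
noncomputable def stdNormalPdf (u : ℝ) : ℝ := Real.exp (-u ^ 2 / 2) / Real.sqrt (2 * Real.pi)

/-- The standard normal cdf Φ(z) = ∫_{-∞}^z φ(u) du. -/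
noncomputable def stdNormalCdf (z : ℝ) : ℝ := ∫ u in Set.Iic z, stdNormalPdf u

/-!
Writing `D(ν) = φ(z+ν) − φ(z−ν)`, which is positive for `z < 0 < ν`, the identities
`φ' = −u φ` and `Φ' = φ` give `∂R/∂ν = 2 φ(z+ν) φ(z−ν) T(ν) / D(ν)²` with
`T(ν) = z (Φ(z+ν) − Φ(z−ν)) + D(ν) = ∫_{z−ν}^{z+ν} (z − u) φ(u) du`.
The weight `z − u` is odd about `z` and `φ` puts more mass to the right of `z`, where the weight is
negative. Indeed `T(0) = 0` and `T'(ν) = −ν D(ν) ≤ 0`, so `T ≤ 0` and `R` is non-increasing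
in `ν` on all of `ν > 0`.
-/

lemma stdNormalPdf_eq_gaussianPDFReal : stdNormalPdf = ProbabilityTheory.gaussianPDFReal 0 1 := by
  ext u
  simp [stdNormalPdf, ProbabilityTheory.gaussianPDFReal, div_eq_inv_mul]

lemma stdNormalPdf_pos (u : ℝ) : 0 < stdNormalPdf u := by
  rw [stdNormalPdf_eq_gaussianPDFReal]
  exact ProbabilityTheory.gaussianPDFReal_pos _ _ _ one_ne_zero

lemma integrable_stdNormalPdf : Integrable stdNormalPdf := by
  rw [stdNormalPdf_eq_gaussianPDFReal]
  exact ProbabilityTheory.integrable_gaussianPDFReal _ _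

lemma continuous_stdNormalPdf : Continuous stdNormalPdf := by
  unfold stdNormalPdf
  fun_prop

lemma hasDerivAt_stdNormalPdf (u : ℝ) : HasDerivAt stdNormalPdf (-u * stdNormalPdf u) u := by
  refine HasDerivAt.congr_deriv (f := stdNormalPdf)
    (((hasDerivAt_pow 2 u).fun_neg.div_const 2).exp.div_const (√(2 * π))) ?_
  rw [stdNormalPdf]
  push_cast
  ring

lemma hasDerivAt_stdNormalCdf (x : ℝ) : HasDerivAt stdNormalCdf (stdNormalPdf x) x := by
  have hint := integrable_stdNormalPdf
  have hsplit : stdNormalCdf = fun y ↦ stdNormalCdf 0 + ∫ t in (0 : ℝ)..y, stdNormalPdf t := by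
    ext y
    rw [stdNormalCdf, stdNormalCdf, ← intervalIntegral.integral_Iic_sub_Iic hint.integrableOn
      hint.integrableOn]
    ring
  rw [hsplit]
  exact (intervalIntegral.integral_hasDerivAt_right hint.intervalIntegrable
    (continuous_stdNormalPdf.stronglyMeasurableAtFilter _ _)
    continuous_stdNormalPdf.continuousAt).const_add _

lemma stdNormalPdf_sub_lt_stdNormalPdf_add {z ν : ℝ} (hz : z < 0) (hν : 0 < ν) :
    stdNormalPdf (z - ν) < stdNormalPdf (z + ν) := by
  unfold stdNormalPdf
  gcongr ?_ / _
  exact exp_lt_exp.2 (by nlinarith)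

noncomputable def strangleTilt (z ν : ℝ) : ℝ :=
  z * (stdNormalCdf (z + ν) - stdNormalCdf (z - ν)) +
    (stdNormalPdf (z + ν) - stdNormalPdf (z - ν))

lemma hasDerivAt_strangleTilt (z ν : ℝ) :
    HasDerivAt (strangleTilt z) (-ν * (stdNormalPdf (z + ν) - stdNormalPdf (z - ν))) ν := by
  have hΦ := ((hasDerivAt_stdNormalCdf (z + ν)).comp_const_add z ν).sub
    ((hasDerivAt_stdNormalCdf (z - ν)).comp_const_sub z ν)
  have hφ := ((hasDerivAt_stdNormalPdf (z + ν)).comp_const_add z ν).sub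
    ((hasDerivAt_stdNormalPdf (z - ν)).comp_const_sub z ν)
  exact ((hΦ.const_mul z).add hφ).congr_deriv (by ring)

lemma strangleTilt_nonpos {z ν : ℝ} (hz : z < 0) (hν : 0 ≤ ν) : strangleTilt z ν ≤ 0 := by
  have hanti : AntitoneOn (strangleTilt z) (Set.Ici 0) := by
    refine antitoneOn_of_hasDerivWithinAt_nonpos (convex_Ici 0)
      (fun t _ ↦ (hasDerivAt_strangleTilt z t).continuousAt.continuousWithinAt)
      (fun t _ ↦ (hasDerivAt_strangleTilt z t).hasDerivWithinAt) fun t ht ↦ ?_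
    rw [interior_Ici, Set.mem_Ioi] at ht
    have hlt := stdNormalPdf_sub_lt_stdNormalPdf_add hz ht
    nlinarith
  simpa [strangleTilt] using hanti Set.self_mem_Ici hν hν

noncomputable def strangleRelativeValue (z ν : ℝ) : ℝ :=
  (stdNormalPdf (z - ν) * stdNormalCdf (z + ν) - stdNormalPdf (z + ν) * stdNormalCdf (z - ν)) /
    (stdNormalPdf (z + ν) - stdNormalPdf (z - ν))

lemma hasDerivAt_strangleRelativeValue {z ν : ℝ} (hz : z < 0) (hν : 0 < ν) :
    HasDerivAt (strangleRelativeValue z)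
      (2 * stdNormalPdf (z + ν) * stdNormalPdf (z - ν) * strangleTilt z ν /
        (stdNormalPdf (z + ν) - stdNormalPdf (z - ν)) ^ 2) ν := by
  have hΦa := (hasDerivAt_stdNormalCdf (z + ν)).comp_const_add z ν
  have hΦb := (hasDerivAt_stdNormalCdf (z - ν)).comp_const_sub z ν
  have hφa := (hasDerivAt_stdNormalPdf (z + ν)).comp_const_add z ν
  have hφb := (hasDerivAt_stdNormalPdf (z - ν)).comp_const_sub z ν
  have hD : stdNormalPdf (z + ν) - stdNormalPdf (z - ν) ≠ 0 :=
    (sub_pos.2 (stdNormalPdf_sub_lt_stdNormalPdf_add hz hν)).ne'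
  refine (((hφb.mul hΦa).sub (hφa.mul hΦb)).div (hφa.sub hφb) hD).congr_deriv ?_
  simp only [Pi.sub_apply, Pi.mul_apply, strangleTilt]
  field_simp
  ring

lemma strangleRelativeValue_antitoneOn {z : ℝ} (hz : z < 0) :
    AntitoneOn (strangleRelativeValue z) (Set.Ioi 0) := by
  refine antitoneOn_of_hasDerivWithinAt_nonpos (convex_Ioi 0)
    (fun ν hν ↦ (hasDerivAt_strangleRelativeValue hz hν).continuousAt.continuousWithinAt)
    (fun ν hν ↦ (hasDerivAt_strangleRelativeValue hz (by simpa using hν)).hasDerivWithinAt)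
    fun ν hν ↦ ?_
  rw [interior_Ioi] at hν
  have hφa := stdNormalPdf_pos (z + ν)
  have hφb := stdNormalPdf_pos (z - ν)
  exact div_nonpos_of_nonpos_of_nonneg
    (mul_nonpos_of_nonneg_of_nonpos (by positivity) (strangleTilt_nonpos hz hν.le)) (sq_nonneg _)

/-- Lemma 1(a): for fixed z < 0, the relative value
R(z,ν) = (φ(z−ν)Φ(z+ν) − φ(z+ν)Φ(z−ν))/(φ(z+ν) − φ(z−ν)) is monotonically
non-increasing in ν on the set {ν | 0 < ν ∧ z < −ν/2}. -/
theorem strangle_relative_value_antitoneOn_nu (z : ℝ) (hz : z < 0) :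
    AntitoneOn
      (fun ν : ℝ =>
        (stdNormalPdf (z - ν) * stdNormalCdf (z + ν) -
            stdNormalPdf (z + ν) * stdNormalCdf (z - ν)) /
          (stdNormalPdf (z + ν) - stdNormalPdf (z - ν)))
      {ν : ℝ | 0 < ν ∧ z < -ν / 2} :=
  (strangleRelativeValue_antitoneOn hz).mono fun _ hν ↦ hν.1
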